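/- arXiv:2309.16819 — 2 statements merged into one kernel-verified Lean document; each statement's English description precedes it below -/
import Mathlib

section
/- If n ≥ 1 and (φ_max² · σ_max / μ_min) · γⁿ < 1, then there exists a unique function q̃ : X × A → ℝ satisfying q̃ = Π(Hⁿ q̃), and there exists a unique parameter vector ω̃ⁿ ∈ ℝ^k such that q_{ω̃ⁿ} = Π(Hⁿ q_{ω̃ⁿ}). -/
open Finset Matrix

variable {X A : Type*}

noncomputable def bellman [Fintype X] [Fintype A] [Nonempty A]
    (P : X → A → X → ℝ) (r : X × A → ℝ) (γ : ℝ) (q : X × A → ℝ) :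
    X × A → ℝ :=
  fun z => r z + γ * ∑ x' : X, P z.1 z.2 x' *
    Finset.univ.sup' Finset.univ_nonempty (fun a' : A => q (x', a'))

noncomputable def supNorm [Fintype X] [Fintype A] [Nonempty X] [Nonempty A]
    (q : X × A → ℝ) : ℝ :=
  Finset.univ.sup' Finset.univ_nonempty (fun z : X × A => |q z|)

noncomputable def munorm [Fintype X] [Fintype A] (μ q : X × A → ℝ) : ℝ :=
  Real.sqrt (∑ z : X × A, μ z * q z ^ 2)

def qlin {k : ℕ} (φ : X × A → Fin k → ℝ) (ω : Fin k → ℝ) : X × A → ℝ :=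
  fun z => φ z ⬝ᵥ ω

noncomputable def cov [Fintype X] [Fintype A] {k : ℕ}
    (μ : X × A → ℝ) (φ : X × A → Fin k → ℝ) : Matrix (Fin k) (Fin k) ℝ :=
  ∑ z : X × A, μ z • Matrix.vecMulVec (φ z) (φ z)

noncomputable def proj [Fintype X] [Fintype A] {k : ℕ}
    (μ : X × A → ℝ) (φ : X × A → Fin k → ℝ) (q : X × A → ℝ) : X × A → ℝ :=
  fun z => φ z ⬝ᵥ (cov μ φ)⁻¹.mulVec (∑ z' : X × A, (μ z' * q z') • φ z')

noncomputable def enorm2 {k : ℕ} (v : Fin k → ℝ) : ℝ :=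
  Real.sqrt (∑ i, v i ^ 2)

noncomputable def phiMax [Fintype X] [Fintype A] [Nonempty X] [Nonempty A]
    {k : ℕ} (φ : X × A → Fin k → ℝ) : ℝ :=
  Finset.univ.sup' Finset.univ_nonempty (fun z : X × A => enorm2 (φ z))

noncomputable def sigmaMax {k : ℕ} (M : Matrix (Fin k) (Fin k) ℝ) : ℝ :=
  ‖LinearMap.toContinuousLinearMap (Matrix.toEuclideanLin M)‖

noncomputable def gmap [Fintype X] [Fintype A] [Nonempty A] {k : ℕ}
    (P : X → A → X → ℝ) (r : X × A → ℝ) (γ : ℝ)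
    (μ : X × A → ℝ) (φ : X × A → Fin k → ℝ) (n : ℕ) (ω : Fin k → ℝ) :
    Fin k → ℝ :=
  ∑ z : X × A, (μ z * ((bellman P r γ)^[n] (qlin φ ω) z - qlin φ ω z)) • φ z

section aux

lemma my_abs_sup'_sub {A : Type*} [Fintype A] [Nonempty A]
    (f g : A → ℝ) (c : ℝ) (h : ∀ a, |f a - g a| ≤ c) :
    |Finset.univ.sup' Finset.univ_nonempty f - Finset.univ.sup' Finset.univ_nonempty g| ≤ c := by
  rw [abs_sub_le_iff]
  constructor
  · rw [sub_le_iff_le_add]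
    refine Finset.sup'_le _ _ fun a _ => ?_
    have h1 := abs_le.1 (h a)
    have h2 := Finset.le_sup' g (Finset.mem_univ a)
    linarith [h1.2]
  · rw [sub_le_iff_le_add]
    refine Finset.sup'_le _ _ fun a _ => ?_
    have h1 := abs_le.1 (h a)
    have h2 := Finset.le_sup' f (Finset.mem_univ a)
    linarith [h1.1]

noncomputable def eL {k : ℕ} : (Fin k → ℝ) ≃ₗ[ℝ] EuclideanSpace ℝ (Fin k) :=
  (WithLp.linearEquiv 2 ℝ (Fin k → ℝ)).symm

lemma enorm2_eq {k : ℕ} (v : Fin k → ℝ) : enorm2 v = ‖eL v‖ := by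
  rw [EuclideanSpace.norm_eq]
  simp [enorm2, eL, Real.norm_eq_abs, sq_abs]

lemma enorm2_nonneg {k : ℕ} (v : Fin k → ℝ) : 0 ≤ enorm2 v := Real.sqrt_nonneg _

lemma enorm2_sum_le {k : ℕ} {ι : Type*} [Fintype ι] (f : ι → Fin k → ℝ) :
    enorm2 (∑ i, f i) ≤ ∑ i, enorm2 (f i) := by
  simp only [enorm2_eq]
  rw [map_sum]
  exact norm_sum_le _ _

lemma enorm2_smul {k : ℕ} (c : ℝ) (v : Fin k → ℝ) : enorm2 (c • v) = |c| * enorm2 v := by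
  rw [enorm2_eq, _root_.map_smul, norm_smul, Real.norm_eq_abs, enorm2_eq]

lemma abs_dot_le {k : ℕ} (v u : Fin k → ℝ) : |v ⬝ᵥ u| ≤ enorm2 v * enorm2 u := by
  have h1 := Real.sum_mul_le_sqrt_mul_sqrt Finset.univ v u
  have h2 := Real.sum_mul_le_sqrt_mul_sqrt Finset.univ (fun i => -v i) u
  simp only [neg_mul, Finset.sum_neg_distrib, neg_sq] at h2
  rw [abs_le]
  constructor
  · unfold enorm2
    show -(Real.sqrt _ * Real.sqrt _) ≤ v ⬝ᵥ u
    have : v ⬝ᵥ u = ∑ i, v i * u i := rfl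
    rw [this]
    linarith
  · exact h1

lemma enorm2_mulVec_le {k : ℕ} (M : Matrix (Fin k) (Fin k) ℝ) (v : Fin k → ℝ) :
    enorm2 (M.mulVec v) ≤ sigmaMax M * enorm2 v := by
  rw [enorm2_eq, enorm2_eq]
  have h := (LinearMap.toContinuousLinearMap (Matrix.toEuclideanLin M)).le_opNorm (eL v)
  have e : LinearMap.toContinuousLinearMap (Matrix.toEuclideanLin M) (eL v) = eL (M.mulVec v) := rfl
  rwa [e] at h

lemma sigmaMax_nonneg {k : ℕ} (M : Matrix (Fin k) (Fin k) ℝ) : 0 ≤ sigmaMax M := norm_nonneg _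

lemma bellman_pointwise [Fintype X] [Fintype A] [Nonempty A]
    (P : X → A → X → ℝ) (r : X × A → ℝ) (γ : ℝ) (hγ0 : 0 ≤ γ)
    (hP0 : ∀ x a x', 0 ≤ P x a x') (hP1 : ∀ x a, ∑ x' : X, P x a x' = 1)
    (q q' : X × A → ℝ) (c : ℝ) (h : ∀ z, |q z - q' z| ≤ c) (z : X × A) :
    |bellman P r γ q z - bellman P r γ q' z| ≤ γ * c := by
  have key : bellman P r γ q z - bellman P r γ q' z
      = γ * ∑ x' : X, P z.1 z.2 x' *
        (Finset.univ.sup' Finset.univ_nonempty (fun a' : A => q (x', a'))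
          - Finset.univ.sup' Finset.univ_nonempty (fun a' : A => q' (x', a'))) := by
    simp only [bellman, mul_sub, Finset.sum_sub_distrib]
    ring
  rw [key, abs_mul, abs_of_nonneg hγ0]
  refine mul_le_mul_of_nonneg_left ?_ hγ0
  calc |∑ x' : X, P z.1 z.2 x' *
        (Finset.univ.sup' Finset.univ_nonempty (fun a' : A => q (x', a'))
          - Finset.univ.sup' Finset.univ_nonempty (fun a' : A => q' (x', a')))|
      ≤ ∑ x' : X, |P z.1 z.2 x' *
        (Finset.univ.sup' Finset.univ_nonempty (fun a' : A => q (x', a'))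
          - Finset.univ.sup' Finset.univ_nonempty (fun a' : A => q' (x', a')))| :=
        Finset.abs_sum_le_sum_abs _ _
    _ ≤ ∑ x' : X, P z.1 z.2 x' * c := by
        refine Finset.sum_le_sum fun x' _ => ?_
        rw [abs_mul, abs_of_nonneg (hP0 _ _ _)]
        exact mul_le_mul_of_nonneg_left
          (my_abs_sup'_sub _ _ c (fun a => h (x', a))) (hP0 _ _ _)
    _ = c := by rw [← Finset.sum_mul, hP1, one_mul]

lemma bellman_iter_pointwise [Fintype X] [Fintype A] [Nonempty A]
    (P : X → A → X → ℝ) (r : X × A → ℝ) (γ : ℝ) (hγ0 : 0 ≤ γ)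
    (hP0 : ∀ x a x', 0 ≤ P x a x') (hP1 : ∀ x a, ∑ x' : X, P x a x' = 1) (n : ℕ) :
    ∀ (q q' : X × A → ℝ) (c : ℝ), (∀ z, |q z - q' z| ≤ c) →
      ∀ z, |(bellman P r γ)^[n] q z - (bellman P r γ)^[n] q' z| ≤ γ ^ n * c := by
  induction n with
  | zero => intro q q' c h z; simpa using h z
  | succ m ih =>
      intro q q' c h z
      rw [Function.iterate_succ_apply', Function.iterate_succ_apply']
      have key := bellman_pointwise P r γ hγ0 hP0 hP1
        ((bellman P r γ)^[m] q) ((bellman P r γ)^[m] q') (γ ^ m * c) (ih q q' c h) z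
      have e : γ * (γ ^ m * c) = γ ^ (m + 1) * c := by ring
      linarith [key]

lemma proj_sub [Fintype X] [Fintype A] {k : ℕ}
    (μ : X × A → ℝ) (φ : X × A → Fin k → ℝ) (q q' : X × A → ℝ) (z : X × A) :
    proj μ φ q z - proj μ φ q' z
      = φ z ⬝ᵥ (cov μ φ)⁻¹.mulVec (∑ z' : X × A, (μ z' * (q z' - q' z')) • φ z') := by
  have hw : (∑ z' : X × A, (μ z' * q z') • φ z') - (∑ z' : X × A, (μ z' * q' z') • φ z')
      = ∑ z' : X × A, (μ z' * (q z' - q' z')) • φ z' := by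
    rw [← Finset.sum_sub_distrib]
    refine Finset.sum_congr rfl fun z' _ => ?_
    rw [← sub_smul, ← mul_sub]
  simp only [proj]
  rw [← dotProduct_sub, ← Matrix.mulVec_sub, hw]

lemma proj_pointwise [Fintype X] [Fintype A] [Nonempty X] [Nonempty A] {k : ℕ}
    (μ : X × A → ℝ) (φ : X × A → Fin k → ℝ)
    (hμ0 : ∀ z, 0 ≤ μ z) (hμ1 : ∑ z : X × A, μ z = 1)
    (q q' : X × A → ℝ) (c : ℝ) (h : ∀ z, |q z - q' z| ≤ c) (z : X × A) :
    |proj μ φ q z - proj μ φ q' z| ≤ phiMax φ ^ 2 * sigmaMax (cov μ φ)⁻¹ * c := by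
  rw [proj_sub]
  set w : Fin k → ℝ := ∑ z' : X × A, (μ z' * (q z' - q' z')) • φ z' with hwdef
  have hφmax : ∀ z : X × A, enorm2 (φ z) ≤ phiMax φ := fun z => by
    unfold phiMax
    exact Finset.le_sup' (fun z : X × A => enorm2 (φ z)) (Finset.mem_univ z)
  have hφ0 : 0 ≤ phiMax φ := le_trans (enorm2_nonneg _) (hφmax z)
  have hc : 0 ≤ c := le_trans (abs_nonneg _) (h z)
  have hw : enorm2 w ≤ phiMax φ * c := by
    calc enorm2 w ≤ ∑ z' : X × A, enorm2 ((μ z' * (q z' - q' z')) • φ z') := enorm2_sum_le _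
      _ ≤ ∑ z' : X × A, μ z' * (phiMax φ * c) := by
          refine Finset.sum_le_sum fun z' _ => ?_
          rw [enorm2_smul, abs_mul, abs_of_nonneg (hμ0 z')]
          have h1 : μ z' * |q z' - q' z'| * enorm2 (φ z') ≤ μ z' * c * phiMax φ :=
            mul_le_mul (mul_le_mul_of_nonneg_left (h z') (hμ0 z')) (hφmax z')
              (enorm2_nonneg _) (mul_nonneg (hμ0 z') hc)
          linarith [h1, mul_comm (phiMax φ) c]
      _ = phiMax φ * c := by rw [← Finset.sum_mul, hμ1, one_mul]
  calc |φ z ⬝ᵥ (cov μ φ)⁻¹.mulVec w|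
      ≤ enorm2 (φ z) * enorm2 ((cov μ φ)⁻¹.mulVec w) := abs_dot_le _ _
    _ ≤ phiMax φ * (sigmaMax (cov μ φ)⁻¹ * enorm2 w) :=
        mul_le_mul (hφmax z) (enorm2_mulVec_le _ _) (enorm2_nonneg _) hφ0
    _ ≤ phiMax φ * (sigmaMax (cov μ φ)⁻¹ * (phiMax φ * c)) := by
        refine mul_le_mul_of_nonneg_left
          (mul_le_mul_of_nonneg_left hw (sigmaMax_nonneg _)) hφ0
    _ = phiMax φ ^ 2 * sigmaMax (cov μ φ)⁻¹ * c := by ring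

end aux

theorem projected_multiBellman_fixed_point
    [Fintype X] [Fintype A] [Nonempty X] [Nonempty A] {k : ℕ}
    (P : X → A → X → ℝ) (r : X × A → ℝ) (γ : ℝ)
    (hγ0 : 0 ≤ γ) (hγ1 : γ < 1)
    (hP0 : ∀ x a x', 0 ≤ P x a x') (hP1 : ∀ x a, ∑ x' : X, P x a x' = 1)
    (φ : X × A → Fin k → ℝ) (μ : X × A → ℝ) (μmin : ℝ)
    (hμmin : 0 < μmin) (hμ : ∀ z, μmin ≤ μ z) (hμ1 : ∑ z : X × A, μ z = 1)
    (hSig : IsUnit (cov μ φ).det)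
    (n : ℕ) (hn : 1 ≤ n)
    (hcontr : (phiMax φ ^ 2 * sigmaMax (cov μ φ)⁻¹ / μmin) * γ ^ n < 1) :
    (∃! qt : X × A → ℝ, qt = proj μ φ ((bellman P r γ)^[n] qt)) ∧
    (∃! ω : Fin k → ℝ, qlin φ ω = proj μ φ ((bellman P r γ)^[n] (qlin φ ω))) := by
  have hμ0 : ∀ z, 0 ≤ μ z := fun z => le_trans hμmin.le (hμ z)
  set F : (X × A → ℝ) → (X × A → ℝ) := fun q => proj μ φ ((bellman P r γ)^[n] q) with hF
  set K : ℝ := phiMax φ ^ 2 * sigmaMax (cov μ φ)⁻¹ * γ ^ n with hKdef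
  have hφ0 : 0 ≤ phiMax φ := by
    refine le_trans (enorm2_nonneg (φ (Classical.arbitrary (X × A)))) ?_
    unfold phiMax
    exact Finset.le_sup' (fun z : X × A => enorm2 (φ z))
      (Finset.mem_univ (Classical.arbitrary (X × A)))
  have hK0 : 0 ≤ K := by
    have := sigmaMax_nonneg (cov μ φ)⁻¹
    have := pow_nonneg hγ0 n
    positivity
  have hK1 : K < 1 := by
    have hmem : μ (Classical.arbitrary (X × A)) ≤ 1 := by
      rw [← hμ1]
      exact Finset.single_le_sum (fun z _ => hμ0 z) (Finset.mem_univ _)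
    have hμle1 : μmin ≤ 1 := le_trans (hμ _) hmem
    have step : K < μmin := by
      have e : (phiMax φ ^ 2 * sigmaMax (cov μ φ)⁻¹ / μmin * γ ^ n) * μmin = K := by
        rw [hKdef, div_mul_eq_mul_div, div_mul_cancel₀ _ (ne_of_gt hμmin)]
      rw [← e]
      calc (phiMax φ ^ 2 * sigmaMax (cov μ φ)⁻¹ / μmin * γ ^ n) * μmin
          < 1 * μmin := mul_lt_mul_of_pos_right hcontr hμmin
        _ = μmin := one_mul _
    linarith
  have lip : ∀ q q', dist (F q) (F q') ≤ K * dist q q' := by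
    intro q q'
    rw [dist_pi_le_iff (mul_nonneg hK0 dist_nonneg)]
    intro z
    rw [Real.dist_eq]
    have hbase : ∀ z, |q z - q' z| ≤ dist q q' := fun z => by
      have := dist_le_pi_dist q q' z
      rwa [Real.dist_eq] at this
    have h1 := bellman_iter_pointwise P r γ hγ0 hP0 hP1 n q q' (dist q q') hbase
    have h2 := proj_pointwise μ φ hμ0 hμ1 ((bellman P r γ)^[n] q) ((bellman P r γ)^[n] q')
      (γ ^ n * dist q q') h1 z
    have e : phiMax φ ^ 2 * sigmaMax (cov μ φ)⁻¹ * (γ ^ n * dist q q') = K * dist q q' := by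
      rw [hKdef]; ring
    rw [e] at h2
    exact h2
  have hFc : ContractingWith K.toNNReal F := by
    constructor
    · exact_mod_cast Real.toNNReal_lt_one.2 hK1
    · refine LipschitzWith.of_dist_le_mul fun x y => ?_
      rw [Real.coe_toNNReal K hK0]
      exact lip x y
  have exun : ∃! qt : X × A → ℝ, qt = F qt := by
    refine ⟨ContractingWith.fixedPoint F hFc, (hFc.fixedPoint_isFixedPt).symm, ?_⟩
    intro y hy
    exact hFc.fixedPoint_unique hy.symm
  refine ⟨exun, ?_⟩
  obtain ⟨qt, hqt, huniq⟩ := exun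
  set ω₀ : Fin k → ℝ :=
    (cov μ φ)⁻¹.mulVec (∑ z' : X × A, (μ z' * ((bellman P r γ)^[n] qt z')) • φ z') with hω₀
  have hqlin : qlin φ ω₀ = qt := by
    funext z
    conv_rhs => rw [hqt]
    rfl
  have hinj : ∀ ω ω' : Fin k → ℝ, qlin φ ω = qlin φ ω' → ω = ω' := by
    intro ω ω' hww
    have hzero : ∀ z, φ z ⬝ᵥ (ω - ω') = 0 := by
      intro z
      have hz := congrFun hww z
      simp only [qlin] at hz
      rw [dotProduct_sub, hz, sub_self]
    have hmv : (cov μ φ).mulVec (ω - ω') = 0 := by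
      funext i
      simp only [Matrix.mulVec, dotProduct, cov, Finset.sum_apply, Matrix.sum_apply,
        Matrix.smul_apply, Matrix.vecMulVec_apply, smul_eq_mul, Pi.zero_apply]
      simp only [Finset.sum_mul]
      rw [Finset.sum_comm]
      refine Finset.sum_eq_zero fun z _ => ?_
      have hz := hzero z
      have hz' : ∑ j, φ z j * (ω - ω') j = 0 := hz
      calc ∑ j, μ z * (φ z i * φ z j) * (ω - ω') j
          = μ z * φ z i * ∑ j, φ z j * (ω - ω') j := by
            rw [Finset.mul_sum]
            refine Finset.sum_congr rfl fun j _ => ?_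
            ring
        _ = 0 := by rw [hz', mul_zero]
    have hv : ω - ω' = 0 := by
      have h1 := congrArg (fun u => (cov μ φ)⁻¹.mulVec u) hmv
      rw [Matrix.mulVec_mulVec, Matrix.nonsing_inv_mul _ hSig, Matrix.one_mulVec,
        Matrix.mulVec_zero] at h1
      exact h1
    exact sub_eq_zero.1 hv
  refine ⟨ω₀, ?_, ?_⟩
  · show qlin φ ω₀ = F (qlin φ ω₀)
    rw [hqlin]
    exact hqt
  · intro ω hω
    have : qlin φ ω = qt := huniq (qlin φ ω) hω
    exact hinj ω ω₀ (this.trans hqlin.symm)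
end

section
/- Let λ_min > 0 denote the smallest eigenvalue of the (symmetric positive definite) covariance matrix Σ, and suppose n ≥ 1 satisfies (φ_max² / μ_min) · γⁿ < λ_min. If ω̃ⁿ ∈ ℝ^k satisfies g_n(ω̃ⁿ) = 0, then for every ω ∈ ℝ^k with ω ≠ ω̃ⁿ, one has ⟨ω̃ⁿ − ω, g_n(ω)⟩ > 0; in particular ω̃ⁿ is the unique zero of g_n. -/
open Finset Matrix

variable {X A : Type*}

-- quadratic form lower bound via min eigenvalue
lemma eigen_lower {k : ℕ} (M : Matrix (Fin k) (Fin k) ℝ) (hM : M.IsHermitian) (c : ℝ)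
    (hc : ∀ i, c ≤ hM.eigenvalues i) (x : Fin k → ℝ) :
    c * (x ⬝ᵥ x) ≤ x ⬝ᵥ M *ᵥ x := by
  set U := (hM.eigenvectorUnitary : Matrix (Fin k) (Fin k) ℝ) with hUdef
  have hU : U * star U = 1 := Matrix.mem_unitaryGroup_iff.mp hM.eigenvectorUnitary.2
  have key : M - c • 1 = U * (Matrix.diagonal (fun i => hM.eigenvalues i - c)) * star U := by
    have hs := hM.spectral_theorem
    rw [RCLike.ofReal_real_eq_id, Unitary.conjStarAlgAut_apply] at hs
    have hd : Matrix.diagonal (fun i => hM.eigenvalues i - c)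
        = Matrix.diagonal (id ∘ hM.eigenvalues) - c • (1 : Matrix (Fin k) (Fin k) ℝ) := by
      rw [Matrix.smul_one_eq_diagonal, ← Matrix.diagonal_sub]
      rfl
    rw [hd, Matrix.mul_sub, Matrix.sub_mul, ← hs]
    congr 1
    rw [Matrix.mul_smul, Matrix.mul_one, Matrix.smul_mul, hU]
  have hps : (M - c • 1).PosSemidef := by
    rw [key]
    have := (Matrix.posSemidef_diagonal_iff.mpr
      (fun i => sub_nonneg.mpr (hc i))).mul_mul_conjTranspose_same U
    simpa [Matrix.star_eq_conjTranspose] using this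
  have h2 := hps.dotProduct_mulVec_nonneg x
  simp only [star_trivial, RCLike.re_to_real, Matrix.sub_mulVec, dotProduct_sub,
    Matrix.smul_mulVec, Matrix.one_mulVec, dotProduct_smul, smul_eq_mul] at h2
  linarith

lemma quad_eq [Fintype X] [Fintype A] {k : ℕ} (μ : X × A → ℝ) (φ : X × A → Fin k → ℝ)
    (x : Fin k → ℝ) :
    x ⬝ᵥ (cov μ φ) *ᵥ x = ∑ z : X × A, μ z * (φ z ⬝ᵥ x) ^ 2 := by
  simp only [cov, dotProduct, Matrix.mulVec, Matrix.sum_apply, Matrix.smul_apply,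
    Matrix.vecMulVec_apply, smul_eq_mul, pow_two, Finset.sum_mul, Finset.mul_sum]
  refine Eq.trans (Finset.sum_congr rfl fun i _ => Finset.sum_comm) ?_
  refine Eq.trans Finset.sum_comm ?_
  refine Finset.sum_congr rfl fun z _ => Finset.sum_congr rfl fun i _ =>
    Finset.sum_congr rfl fun j _ => ?_
  ring

lemma cs_bound {k : ℕ} (u v : Fin k → ℝ) : |u ⬝ᵥ v| ≤ enorm2 u * enorm2 v := by
  have h := Finset.sum_mul_sq_le_sq_mul_sq Finset.univ u v
  have : |u ⬝ᵥ v| = Real.sqrt ((u ⬝ᵥ v) ^ 2) := (Real.sqrt_sq_eq_abs _).symm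
  rw [this, enorm2, enorm2, ← Real.sqrt_mul (by positivity)]
  exact Real.sqrt_le_sqrt h

lemma sup'_sub_le {ι : Type*} (s : Finset ι) (hs : s.Nonempty) (f g : ι → ℝ) (C : ℝ)
    (h : ∀ i ∈ s, |f i - g i| ≤ C) : |s.sup' hs f - s.sup' hs g| ≤ C := by
  rw [abs_sub_le_iff]
  constructor
  · rw [sub_le_iff_le_add]
    refine Finset.sup'_le _ _ fun i hi => ?_
    have := abs_le.mp (h i hi)
    have h2 := Finset.le_sup' g hi
    linarith [h2]
  · rw [sub_le_iff_le_add]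
    refine Finset.sup'_le _ _ fun i hi => ?_
    have := abs_le.mp (h i hi)
    have h2 := Finset.le_sup' f hi
    linarith [h2]

lemma bellman_contract [Fintype X] [Fintype A] [Nonempty A]
    (P : X → A → X → ℝ) (r : X × A → ℝ) (γ : ℝ) (hγ0 : 0 ≤ γ)
    (hP0 : ∀ x a x', 0 ≤ P x a x') (hP1 : ∀ x a, ∑ x' : X, P x a x' = 1)
    (q1 q2 : X × A → ℝ) (C : ℝ) (hC : ∀ z, |q1 z - q2 z| ≤ C) (z : X × A) :
    |bellman P r γ q1 z - bellman P r γ q2 z| ≤ γ * C := by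
  have key : ∀ x' : X,
      |Finset.univ.sup' Finset.univ_nonempty (fun a' : A => q1 (x', a')) -
       Finset.univ.sup' Finset.univ_nonempty (fun a' : A => q2 (x', a'))| ≤ C :=
    fun x' => sup'_sub_le _ _ _ _ _ (fun a _ => hC (x', a))
  have : bellman P r γ q1 z - bellman P r γ q2 z =
      γ * ∑ x' : X, P z.1 z.2 x' *
        (Finset.univ.sup' Finset.univ_nonempty (fun a' : A => q1 (x', a')) -
         Finset.univ.sup' Finset.univ_nonempty (fun a' : A => q2 (x', a'))) := by
    simp only [bellman, mul_sub, Finset.sum_sub_distrib]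
    ring
  rw [this, abs_mul, abs_of_nonneg hγ0]
  refine mul_le_mul_of_nonneg_left ?_ hγ0
  refine le_trans (Finset.abs_sum_le_sum_abs _ _) ?_
  have hb : ∑ x' : X, |P z.1 z.2 x' *
        (Finset.univ.sup' Finset.univ_nonempty (fun a' : A => q1 (x', a')) -
         Finset.univ.sup' Finset.univ_nonempty (fun a' : A => q2 (x', a')))|
      ≤ ∑ x' : X, P z.1 z.2 x' * C := by
    refine Finset.sum_le_sum fun x' _ => ?_
    rw [abs_mul, abs_of_nonneg (hP0 _ _ _)]
    exact mul_le_mul_of_nonneg_left (key x') (hP0 _ _ _)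
  exact le_trans hb (le_of_eq (by rw [← Finset.sum_mul, hP1 z.1 z.2, one_mul]))

lemma bellman_iter_contract [Fintype X] [Fintype A] [Nonempty A]
    (P : X → A → X → ℝ) (r : X × A → ℝ) (γ : ℝ) (hγ0 : 0 ≤ γ)
    (hP0 : ∀ x a x', 0 ≤ P x a x') (hP1 : ∀ x a, ∑ x' : X, P x a x' = 1)
    (q1 q2 : X × A → ℝ) (C : ℝ) (hC : ∀ z, |q1 z - q2 z| ≤ C) (n : ℕ) (z : X × A) :
    |(bellman P r γ)^[n] q1 z - (bellman P r γ)^[n] q2 z| ≤ γ ^ n * C := by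
  induction n generalizing z with
  | zero => simpa using hC z
  | succ m ih =>
    rw [Function.iterate_succ_apply', Function.iterate_succ_apply']
    have h := bellman_contract P r γ hγ0 hP0 hP1 _ _ _ ih z
    calc |bellman P r γ ((bellman P r γ)^[m] q1) z - bellman P r γ ((bellman P r γ)^[m] q2) z|
        ≤ γ * (γ ^ m * C) := h
      _ = γ ^ (m + 1) * C := by ring

theorem unique_zero_of_expected_update
    [Fintype X] [Fintype A] [Nonempty X] [Nonempty A] {k : ℕ}
    (P : X → A → X → ℝ) (r : X × A → ℝ) (γ : ℝ)
    (hγ0 : 0 ≤ γ) (hγ1 : γ < 1)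
    (hP0 : ∀ x a x', 0 ≤ P x a x') (hP1 : ∀ x a, ∑ x' : X, P x a x' = 1)
    (φ : X × A → Fin k → ℝ) (μ : X × A → ℝ) (μmin : ℝ)
    (hμmin : 0 < μmin) (hμ : ∀ z, μmin ≤ μ z) (hμ1 : ∑ z : X × A, μ z = 1)
    (hSig : IsUnit (cov μ φ).det)
    (hHerm : (cov μ φ).IsHermitian)
    (i₀ : Fin k) (lamMin : ℝ) (hlam : lamMin = hHerm.eigenvalues i₀)
    (hlamMin : ∀ i : Fin k, lamMin ≤ hHerm.eigenvalues i) (hlamPos : 0 < lamMin)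
    (n : ℕ) (hn : 1 ≤ n)
    (hcond : (phiMax φ ^ 2 / μmin) * γ ^ n < lamMin)
    (ωt : Fin k → ℝ) (hωt : gmap P r γ μ φ n ωt = 0) :
    (∀ ω : Fin k → ℝ, ω ≠ ωt → 0 < (ωt - ω) ⬝ᵥ gmap P r γ μ φ n ω) ∧
    (∀ ω : Fin k → ℝ, gmap P r γ μ φ n ω = 0 → ω = ωt) := by
  -- μmin ≤ 1
  have hμle1 : μmin ≤ 1 := by
    obtain ⟨z₀⟩ := (inferInstance : Nonempty (X × A))
    have h1 : μ z₀ ≤ ∑ z : X × A, μ z := by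
      refine Finset.single_le_sum (fun z _ => ?_) (Finset.mem_univ z₀)
      exact le_trans hμmin.le (hμ z)
    have := hμ z₀
    rw [hμ1] at h1
    linarith
  have hφmax0 : 0 ≤ phiMax φ := by
    obtain ⟨z₀⟩ := (inferInstance : Nonempty (X × A))
    exact le_trans (Real.sqrt_nonneg _) (Finset.le_sup' (fun z => enorm2 (φ z)) (Finset.mem_univ z₀))
  -- key: φmax^2 * γ^n < lamMin
  have hkey : phiMax φ ^ 2 * γ ^ n < lamMin := by
    have h1 : phiMax φ ^ 2 * γ ^ n ≤ (phiMax φ ^ 2 / μmin) * γ ^ n := by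
      refine mul_le_mul_of_nonneg_right ?_ (pow_nonneg hγ0 n)
      rw [le_div_iff₀ hμmin]
      nlinarith [sq_nonneg (phiMax φ)]
    linarith
  have main : ∀ ω : Fin k → ℝ, ω ≠ ωt → 0 < (ωt - ω) ⬝ᵥ gmap P r γ μ φ n ω := by
    intro ω hne
    set Δ : Fin k → ℝ := ωt - ω with hΔ
    set T : (X × A → ℝ) → (X × A → ℝ) := (bellman P r γ)^[n] with hT
    have hdot : ∀ ω' : Fin k → ℝ, Δ ⬝ᵥ gmap P r γ μ φ n ω' =
        ∑ z : X × A, μ z * (T (qlin φ ω') z - qlin φ ω' z) * (φ z ⬝ᵥ Δ) := by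
      intro ω'
      simp only [gmap, dotProduct, Finset.sum_apply, Pi.smul_apply, smul_eq_mul, ← hT,
        Finset.mul_sum, Finset.sum_mul]
      refine Eq.trans Finset.sum_comm ?_
      refine Finset.sum_congr rfl fun z _ => Finset.sum_congr rfl fun i _ => ?_
      ring
    have h0 : ∑ z : X × A, μ z * (T (qlin φ ωt) z - qlin φ ωt z) * (φ z ⬝ᵥ Δ) = 0 := by
      rw [← hdot ωt, hωt, dotProduct_zero]
    have hqd : ∀ z : X × A, qlin φ ωt z - qlin φ ω z = φ z ⬝ᵥ Δ := by
      intro z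
      rw [hΔ, dotProduct_sub]
      rfl
    have hE : Δ ⬝ᵥ gmap P r γ μ φ n ω =
        ∑ z : X × A, μ z * (φ z ⬝ᵥ Δ) ^ 2 +
        ∑ z : X × A, μ z * (φ z ⬝ᵥ Δ) * (T (qlin φ ω) z - T (qlin φ ωt) z) := by
      rw [hdot ω, ← sub_zero (∑ z : X × A, μ z * (T (qlin φ ω) z - qlin φ ω z) * (φ z ⬝ᵥ Δ)),
        ← h0, ← Finset.sum_sub_distrib, ← Finset.sum_add_distrib]
      refine Finset.sum_congr rfl fun z _ => ?_
      have hq : qlin φ ωt z = qlin φ ω z + φ z ⬝ᵥ Δ := by linarith [hqd z]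
      rw [hq]
      ring
    -- eigenvalue lower bound
    have hΔΔ : (0:ℝ) < Δ ⬝ᵥ Δ := by
      have hne' : Δ ≠ 0 := sub_ne_zero.mpr (Ne.symm hne)
      have h1 : (0:ℝ) ≤ Δ ⬝ᵥ Δ := Finset.sum_nonneg fun i _ => mul_self_nonneg _
      rcases h1.lt_or_eq with h | h
      · exact h
      · exact absurd (dotProduct_self_eq_zero.mp h.symm) hne'
    have hS : lamMin * (Δ ⬝ᵥ Δ) ≤ ∑ z : X × A, μ z * (φ z ⬝ᵥ Δ) ^ 2 := by
      rw [← quad_eq μ φ Δ]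
      exact eigen_lower (cov μ φ) hHerm lamMin (fun i => hlamMin i) Δ
    -- pointwise bounds
    have hCS : ∀ z : X × A, |φ z ⬝ᵥ Δ| ≤ phiMax φ * enorm2 Δ := by
      intro z
      refine le_trans (cs_bound (φ z) Δ) ?_
      exact mul_le_mul_of_nonneg_right
        (Finset.le_sup' (fun z => enorm2 (φ z)) (Finset.mem_univ z)) (Real.sqrt_nonneg _)
    have hqlin : ∀ z : X × A, |qlin φ ω z - qlin φ ωt z| ≤ phiMax φ * enorm2 Δ := by
      intro z
      have := hqd z
      have h2 := hCS z
      rw [abs_sub_comm]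
      rw [this] at *
      linarith [abs_le.mp h2]
    have hT2 : ∀ z : X × A, |T (qlin φ ω) z - T (qlin φ ωt) z| ≤
        γ ^ n * (phiMax φ * enorm2 Δ) := by
      intro z
      exact bellman_iter_contract P r γ hγ0 hP0 hP1 _ _ _ hqlin n z
    have henorm : enorm2 Δ ^ 2 = Δ ⬝ᵥ Δ := by
      rw [enorm2, Real.sq_sqrt (Finset.sum_nonneg fun i _ => sq_nonneg _)]
      simp [dotProduct, pow_two]
    -- cross term bound
    have hcross : |∑ z : X × A, μ z * (φ z ⬝ᵥ Δ) * (T (qlin φ ω) z - T (qlin φ ωt) z)| ≤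
        γ ^ n * (phiMax φ ^ 2 * (Δ ⬝ᵥ Δ)) := by
      refine le_trans (Finset.abs_sum_le_sum_abs _ _) ?_
      have hb : ∀ z : X × A, |μ z * (φ z ⬝ᵥ Δ) * (T (qlin φ ω) z - T (qlin φ ωt) z)| ≤
          μ z * ((phiMax φ * enorm2 Δ) * (γ ^ n * (phiMax φ * enorm2 Δ))) := by
        intro z
        have hμz : (0:ℝ) ≤ μ z := le_trans hμmin.le (hμ z)
        have heq : |μ z * (φ z ⬝ᵥ Δ) * (T (qlin φ ω) z - T (qlin φ ωt) z)| =
            μ z * (|φ z ⬝ᵥ Δ| * |T (qlin φ ω) z - T (qlin φ ωt) z|) := by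
          rw [abs_mul, abs_mul, abs_of_nonneg hμz, mul_assoc]
        rw [heq]
        refine mul_le_mul_of_nonneg_left ?_ hμz
        have he0 : (0:ℝ) ≤ enorm2 Δ := Real.sqrt_nonneg _
        exact mul_le_mul (hCS z) (hT2 z) (abs_nonneg _) (mul_nonneg hφmax0 he0)
      refine le_trans (Finset.sum_le_sum fun z _ => hb z) ?_
      rw [← Finset.sum_mul, hμ1, one_mul]
      have : phiMax φ * enorm2 Δ * (γ ^ n * (phiMax φ * enorm2 Δ)) =
          γ ^ n * (phiMax φ ^ 2 * enorm2 Δ ^ 2) := by ring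
      rw [this, henorm]
    rw [hE]
    have habs := abs_le.mp hcross
    have hpos : (0:ℝ) < lamMin * (Δ ⬝ᵥ Δ) - γ ^ n * (phiMax φ ^ 2 * (Δ ⬝ᵥ Δ)) := by
      nlinarith [hkey, hΔΔ]
    linarith
  refine ⟨main, fun ω hω => ?_⟩
  by_contra hne
  have := main ω hne
  rw [hω, dotProduct_zero] at this
  exact lt_irrefl 0 this
end
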